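/- With ξ₄ = −(x¹+3tx²)∂₀ − t³∂₁ + t²∂₂ − t∂₃ + ∂₄ and ξ₃ = 3x²∂₀ + 3t²∂₁ − 2t∂₂ + ∂₃ for a smooth function t on U ⊂ ℝ⁵: at any point p where ξ₄(t)(p) ≠ 0, the five vector fields ξ₄, ξ₃, [ξ₄,ξ₃], [ξ₄,[ξ₄,ξ₃]], [ξ₃,[ξ₄,ξ₃]] span the full tangent space ℝ⁵. Consequently, the distribution span{ξ₃,ξ₄} is either integrable (where ξ₄(t) ≡ 0) or has growth vector (2,3,5) at points where ξ₄(t) ≠ 0. -/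

import Mathlib

/-- The Lie bracket of vector fields on `ℝ⁵` written in coordinates. -/
noncomputable def lieB (X Y : (Fin 5 → ℝ) → Fin 5 → ℝ) (x : Fin 5 → ℝ) : Fin 5 → ℝ :=
  fun i => fderiv ℝ (fun y => Y y i) x (X x) - fderiv ℝ (fun y => X y i) x (Y x)

/-- The vector field `ξ₄ = −(x¹+3tx²)∂₀ − t³∂₁ + t²∂₂ − t∂₃ + ∂₄`. -/
def xi4 (t : (Fin 5 → ℝ) → ℝ) : (Fin 5 → ℝ) → Fin 5 → ℝ :=
  fun x => ![-(x 1 + 3 * t x * x 2), -(t x) ^ 3, (t x) ^ 2, -(t x), 1]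

/-- The vector field `ξ₃ = 3x²∂₀ + 3t²∂₁ − 2t∂₂ + ∂₃`. -/
def xi3 (t : (Fin 5 → ℝ) → ℝ) : (Fin 5 → ℝ) → Fin 5 → ℝ :=
  fun x => ![3 * x 2, 3 * (t x) ^ 2, -(2 * t x), 1, 0]

/-!
Write `a = ξ₄(t)`, `b = ξ₃(t)` and `ζ = ∂ξ₃/∂t = 6t∂₁ − 2∂₂`, `c = ζ(t)`. Differentiating
through `t` gives `[ξ₄,ξ₃] = bξ₃ + aζ`, `[ξ₄,ζ] = 6a∂₁ + cξ₃` and `[ξ₃,ζ] = 6∂₀ + 6b∂₁ − cζ`, so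
by the Leibniz rule, modulo the span of `ξ₃`, `ζ` and `[ξ₄,ξ₃]`, we get `[ξ₄,[ξ₄,ξ₃]] ≡ 6a²∂₁`
and `[ξ₃,[ξ₄,ξ₃]] ≡ 6a∂₀ + 6ab∂₁`. When `a ≠ 0` the five fields thus span `ξ₄, ξ₃, ζ, ∂₀, ∂₁`,
which form a basis, being triangular with respect to `∂₄, ∂₃, ∂₂`.
-/

open VectorField Filter Topology

local notation "ℝ⁵" => Fin 5 → ℝ

section General

variable {E : Type*} [NormedAddCommGroup E] [NormedSpace ℝ E]

-- `V(f)` in the notation of `ξ₄(t)(p) ≠ 0`.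
noncomputable def lieDeriv (V : E → E) (f : E → ℝ) (x : E) : ℝ := fderiv ℝ f x (V x)

theorem lieBracket_smul_add_smul_right {V W₁ W₂ : E → E} {f g : E → ℝ} {x : E}
    (hf : DifferentiableAt ℝ f x) (hg : DifferentiableAt ℝ g x)
    (hW₁ : DifferentiableAt ℝ W₁ x) (hW₂ : DifferentiableAt ℝ W₂ x) :
    lieBracket ℝ V (fun y => f y • W₁ y + g y • W₂ y) x =
      lieDeriv V f x • W₁ x + f x • lieBracket ℝ V W₁ x
        + (lieDeriv V g x • W₂ x + g x • lieBracket ℝ V W₂ x) := by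
  rw [show (fun y => f y • W₁ y + g y • W₂ y) = (fun y => f y • W₁ y) + (fun y => g y • W₂ y)
    from rfl, lieBracket_add_right (hf.fun_smul hW₁) (hg.fun_smul hW₂),
    lieBracket_smul_right hf hW₁, lieBracket_smul_right hg hW₂]
  rfl

theorem fderiv_apply_apply {ι : Type*} [Fintype ι] {Φ : E → ι → ℝ} {x : E}
    (hΦ : DifferentiableAt ℝ Φ x) (v : E) (i : ι) :
    fderiv ℝ Φ x v i = fderiv ℝ (fun y => Φ y i) x v := by
  rw [fderiv_apply hΦ]
  rfl

end General

theorem lieB_eq_lieBracket_of_eventuallyEq {X Y Y' : ℝ⁵ → ℝ⁵} {x : ℝ⁵}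
    (hX : DifferentiableAt ℝ X x) (hY : Y =ᶠ[𝓝 x] Y') (hY' : DifferentiableAt ℝ Y' x) :
    lieB X Y x = lieBracket ℝ X Y' x := by
  ext i
  rw [lieB, lieBracket, Pi.sub_apply, EventuallyEq.fderiv_eq (hY.mono fun y hy => congrFun hy i),
    fderiv_apply_apply hY', fderiv_apply_apply hX, hY.eq_of_nhds]

-- `ζ = ∂ξ₃/∂t`, the derivative of `ξ₃` in the slot where `t` enters.
def zeta (t : ℝ⁵ → ℝ) : ℝ⁵ → ℝ⁵ := fun x => ![0, 6 * t x, -2, 0, 0]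

noncomputable def eta (t : ℝ⁵ → ℝ) : ℝ⁵ → ℝ⁵ :=
  fun x => lieDeriv (xi3 t) t x • xi3 t x + lieDeriv (xi4 t) t x • zeta t x

section Brackets

variable {t : ℝ⁵ → ℝ} {x : ℝ⁵}

theorem differentiableAt_xi4 (ht : DifferentiableAt ℝ t x) : DifferentiableAt ℝ (xi4 t) x := by
  rw [differentiableAt_pi]
  intro i
  fin_cases i <;> simp [xi4] <;> fun_prop

theorem differentiableAt_xi3 (ht : DifferentiableAt ℝ t x) : DifferentiableAt ℝ (xi3 t) x := by
  rw [differentiableAt_pi]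
  intro i
  fin_cases i <;> simp [xi3] <;> fun_prop

theorem differentiableAt_zeta (ht : DifferentiableAt ℝ t x) : DifferentiableAt ℝ (zeta t) x := by
  rw [differentiableAt_pi]
  intro i
  fin_cases i <;> simp [zeta, ht]

theorem fderiv_xi4_apply (ht : DifferentiableAt ℝ t x) (v : ℝ⁵) :
    fderiv ℝ (xi4 t) x v = ![-(v 1 + 3 * t x * v 2), 0, 0, 0, 0] - fderiv ℝ t x v • xi3 t x := by
  ext i
  rw [fderiv_apply_apply (differentiableAt_xi4 ht)]
  fin_cases i <;>
    simp (disch := fun_prop) [xi4, xi3, fderiv_fun_mul, fderiv_fun_add, fderiv_fun_neg,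
      fderiv_fun_pow, fderiv_apply] <;> ring

theorem fderiv_xi3_apply (ht : DifferentiableAt ℝ t x) (v : ℝ⁵) :
    fderiv ℝ (xi3 t) x v = ![3 * v 2, 0, 0, 0, 0] + fderiv ℝ t x v • zeta t x := by
  ext i
  rw [fderiv_apply_apply (differentiableAt_xi3 ht)]
  fin_cases i <;>
    simp (disch := fun_prop) [xi3, zeta, fderiv_fun_mul, fderiv_fun_neg, fderiv_fun_pow,
      fderiv_apply] <;> ring

theorem fderiv_zeta_apply (ht : DifferentiableAt ℝ t x) (v : ℝ⁵) :
    fderiv ℝ (zeta t) x v = (6 * fderiv ℝ t x v) • Pi.single 1 1 := by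
  ext i
  rw [fderiv_apply_apply (differentiableAt_zeta ht)]
  fin_cases i <;> simp (disch := fun_prop) [zeta, fderiv_const_mul, Pi.single_apply]

theorem lieBracket_xi4_xi3 (ht : DifferentiableAt ℝ t x) :
    lieBracket ℝ (xi4 t) (xi3 t) x = eta t x := by
  ext i
  rw [lieBracket, fderiv_xi3_apply ht, fderiv_xi4_apply ht]
  fin_cases i <;> simp [eta, lieDeriv, xi4, xi3, zeta] <;> ring

theorem lieBracket_xi4_zeta (ht : DifferentiableAt ℝ t x) :
    lieBracket ℝ (xi4 t) (zeta t) x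
      = (6 * lieDeriv (xi4 t) t x) • Pi.single 1 1 + lieDeriv (zeta t) t x • xi3 t x := by
  ext i
  rw [lieBracket, fderiv_zeta_apply ht, fderiv_xi4_apply ht]
  fin_cases i <;> simp [lieDeriv, xi3, zeta]
  ring

theorem lieBracket_xi3_zeta (ht : DifferentiableAt ℝ t x) :
    lieBracket ℝ (xi3 t) (zeta t) x = (6 : ℝ) • Pi.single 0 1
      + (6 * lieDeriv (xi3 t) t x) • Pi.single 1 1 - lieDeriv (zeta t) t x • zeta t x := by
  ext i
  rw [lieBracket, fderiv_zeta_apply ht, fderiv_xi3_apply ht]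
  fin_cases i <;> simp [lieDeriv, xi3, zeta]
  ring

theorem differentiableAt_eta (ht : DifferentiableAt ℝ t x)
    (ht' : DifferentiableAt ℝ (fderiv ℝ t) x) :
    DifferentiableAt ℝ (eta t) x :=
  ((ht'.clm_apply (differentiableAt_xi3 ht)).fun_smul (differentiableAt_xi3 ht)).add
    ((ht'.clm_apply (differentiableAt_xi4 ht)).fun_smul (differentiableAt_zeta ht))

theorem lieBracket_eta (V : ℝ⁵ → ℝ⁵) (ht : DifferentiableAt ℝ t x)
    (ht' : DifferentiableAt ℝ (fderiv ℝ t) x) :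
    lieBracket ℝ V (eta t) x =
      lieDeriv V (lieDeriv (xi3 t) t) x • xi3 t x + lieDeriv (xi3 t) t x • lieBracket ℝ V (xi3 t) x
        + (lieDeriv V (lieDeriv (xi4 t) t) x • zeta t x
          + lieDeriv (xi4 t) t x • lieBracket ℝ V (zeta t) x) :=
  lieBracket_smul_add_smul_right (ht'.clm_apply (differentiableAt_xi3 ht))
    (ht'.clm_apply (differentiableAt_xi4 ht)) (differentiableAt_xi3 ht) (differentiableAt_zeta ht)

end Brackets

theorem span_eq_top_of_bracket_relations {K M : Type*} [Field K] [CharZero K] [AddCommGroup M]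
    [Module K M] {X₄ X₃ ζ η u₀ u₁ : M} {a b c α₄ β₄ α₃ β₃ : K} (ha : a ≠ 0)
    (hη : η = b • X₃ + a • ζ) (htop : Submodule.span K {X₄, X₃, ζ, u₀, u₁} = ⊤) :
    Submodule.span K {X₄, X₃, η,
      β₄ • X₃ + b • η + (α₄ • ζ + a • ((6 * a) • u₁ + c • X₃)),
      β₃ • X₃ + (α₃ • ζ + a • ((6 : K) • u₀ + (6 * b) • u₁ - c • ζ))} = ⊤ := by
  set w₁ := β₄ • X₃ + b • η + (α₄ • ζ + a • ((6 * a) • u₁ + c • X₃))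
  set w₂ := β₃ • X₃ + (α₃ • ζ + a • ((6 : K) • u₀ + (6 * b) • u₁ - c • ζ))
  set S := Submodule.span K {X₄, X₃, η, w₁, w₂}
  have hX₄ : X₄ ∈ S := Submodule.subset_span (by simp)
  have hX₃ : X₃ ∈ S := Submodule.subset_span (by simp)
  have hηS : η ∈ S := Submodule.subset_span (by simp)
  have hw₁ : w₁ ∈ S := Submodule.subset_span (by simp)
  have hw₂ : w₂ ∈ S := Submodule.subset_span (by simp)
  have hζ : ζ ∈ S := (S.smul_mem_iff ha).1 <| by
    convert S.sub_mem hηS (S.smul_mem b hX₃) using 1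
    rw [hη]; module
  have hu₁ : u₁ ∈ S := (S.smul_mem_iff (by simp [ha] : 6 * a * a ≠ 0)).1 <| by
    convert S.sub_mem (S.sub_mem (S.sub_mem hw₁ (S.smul_mem (β₄ + a * c) hX₃))
      (S.smul_mem b hηS)) (S.smul_mem α₄ hζ) using 1
    module
  have hu₀ : u₀ ∈ S := (S.smul_mem_iff (by simp [ha] : 6 * a ≠ 0)).1 <| by
    convert S.sub_mem (S.sub_mem (S.sub_mem hw₂ (S.smul_mem β₃ hX₃))
      (S.smul_mem (α₃ - a * c) hζ)) (S.smul_mem (6 * a * b) hu₁) using 1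
    module
  refine top_unique (htop ▸ Submodule.span_le.2 ?_)
  simp [Set.insert_subset_iff, hX₄, hX₃, hζ, hu₀, hu₁]

theorem span_xi4_xi3_zeta_single_eq_top (t : ℝ⁵ → ℝ) (x : ℝ⁵) :
    Submodule.span ℝ {xi4 t x, xi3 t x, zeta t x, Pi.single 0 1, Pi.single 1 1} = ⊤ := by
  set S := Submodule.span ℝ {xi4 t x, xi3 t x, zeta t x, Pi.single 0 1, Pi.single 1 1}
  have hξ₄ : xi4 t x ∈ S := Submodule.subset_span (by simp)
  have hξ₃ : xi3 t x ∈ S := Submodule.subset_span (by simp)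
  have hζ : zeta t x ∈ S := Submodule.subset_span (by simp)
  have h₀ : (Pi.single 0 1 : ℝ⁵) ∈ S := Submodule.subset_span (by simp)
  have h₁ : (Pi.single 1 1 : ℝ⁵) ∈ S := Submodule.subset_span (by simp)
  have h₂ : (Pi.single 2 1 : ℝ⁵) ∈ S := (S.smul_mem_iff (by norm_num : (-2 : ℝ) ≠ 0)).1 <| by
    convert S.sub_mem hζ (S.smul_mem (6 * t x) h₁) using 1
    ext i
    simp only [Pi.sub_apply, Pi.smul_apply, smul_eq_mul]
    fin_cases i <;> simp [zeta]
  have h₃ : (Pi.single 3 1 : ℝ⁵) ∈ S := by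
    convert S.add_mem (S.sub_mem (S.sub_mem hξ₃ (S.smul_mem (3 * x 2) h₀))
      (S.smul_mem (3 * t x ^ 2) h₁)) (S.smul_mem (2 * t x) h₂) using 1
    ext i
    simp only [Pi.add_apply, Pi.sub_apply, Pi.smul_apply, smul_eq_mul]
    fin_cases i <;> simp [xi3]
  have h₄ : (Pi.single 4 1 : ℝ⁵) ∈ S := by
    convert S.add_mem (S.sub_mem (S.add_mem (S.add_mem hξ₄ (S.smul_mem (x 1 + 3 * t x * x 2) h₀))
      (S.smul_mem (t x ^ 3) h₁)) (S.smul_mem (t x ^ 2) h₂)) (S.smul_mem (t x) h₃) using 1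
    ext i
    simp only [Pi.add_apply, Pi.sub_apply, Pi.smul_apply, smul_eq_mul]
    fin_cases i <;> simp [xi4]
  rw [eq_top_iff, ← (Pi.basisFun ℝ (Fin 5)).span_eq, Submodule.span_le]
  rintro _ ⟨i, rfl⟩
  fin_cases i <;> simpa

/-- At any point `p` where `ξ₄(t)(p) ≠ 0`, the five vector fields
`ξ₄, ξ₃, [ξ₄,ξ₃], [ξ₄,[ξ₄,ξ₃]], [ξ₃,[ξ₄,ξ₃]]` span the full tangent space `ℝ⁵`
(so the distribution `span{ξ₃,ξ₄}` has growth `(2,3,5)` there). -/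
theorem growth_two_three_five
    (U : Set (Fin 5 → ℝ)) (hU : IsOpen U) (t : (Fin 5 → ℝ) → ℝ)
    (ht : ContDiffOn ℝ (⊤ : ℕ∞) t U) (p : Fin 5 → ℝ) (hp : p ∈ U)
    (h : fderiv ℝ t p (xi4 t p) ≠ 0) :
    Submodule.span ℝ
      {xi4 t p, xi3 t p, lieB (xi4 t) (xi3 t) p,
        lieB (xi4 t) (lieB (xi4 t) (xi3 t)) p,
        lieB (xi3 t) (lieB (xi4 t) (xi3 t)) p} = ⊤ := by
  have hdt : ∀ᶠ y in 𝓝 p, DifferentiableAt ℝ t y := eventually_of_mem (hU.mem_nhds hp)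
    fun y hy => (ht.contDiffAt (hU.mem_nhds hy)).differentiableAt (by simp)
  have hdtp : DifferentiableAt ℝ t p := hdt.self_of_nhds
  have hdt' : DifferentiableAt ℝ (fderiv ℝ t) p :=
    ((ht.contDiffAt (hU.mem_nhds hp)).fderiv_right (m := 1)
      (ENat.natCast_le_of_coe_top_le_withTop le_rfl 2)).differentiableAt one_ne_zero
  have hη : lieB (xi4 t) (xi3 t) =ᶠ[𝓝 p] eta t := hdt.mono fun y hy =>
    (lieB_eq_lieBracket_of_eventuallyEq (differentiableAt_xi4 hy) EventuallyEq.rfl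
      (differentiableAt_xi3 hy)).trans (lieBracket_xi4_xi3 hy)
  have hdη := differentiableAt_eta hdtp hdt'
  rw [lieB_eq_lieBracket_of_eventuallyEq (differentiableAt_xi4 hdtp) hη hdη,
    lieB_eq_lieBracket_of_eventuallyEq (differentiableAt_xi3 hdtp) hη hdη,
    hη.eq_of_nhds, lieBracket_eta _ hdtp hdt', lieBracket_eta _ hdtp hdt',
    lieBracket_xi4_xi3 hdtp, lieBracket_xi4_zeta hdtp, lieBracket_xi3_zeta hdtp]
  simp only [lieBracket_self, Pi.zero_apply, smul_zero, add_zero]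
  exact span_eq_top_of_bracket_relations h rfl (span_xi4_xi3_zeta_single_eq_top t p)
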